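/- Let K be a field of characteristic 2 and let G be a nonabelian finite 2-group which is a semidirect product of a group ⟨b⟩ of order 2 and an abelian 2-group A (that is, G = A⟨b⟩, A ∩ ⟨b⟩ = 1) with b⁻¹ab = a⁻¹ for all a ∈ A. Then the map φ : x ↦ xx* is a group homomorphism from V(KG) onto the subgroup S_K(G) = {xx* : x ∈ V(KG)} of symmetric units, with kernel V_*(KG); consequently, if K is finite then |V_*(KG)| equals the index of S_K(G) in V(KG), i.e. |V_*(KG)| · |S_K(G)| = |V(KG)|. -/

import Mathlib

/-- The augmentation homomorphism `χ : KG → K`. -/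
noncomputable def aug (K G : Type*) [CommSemiring K] [Group G] :
    MonoidAlgebra K G →ₐ[K] K :=
  MonoidAlgebra.lift (R := K) (M := G) (A := K) 1

/-- The `K`-linear anti-automorphism of `KG` determined by `g ↦ g⁻¹`. -/
noncomputable def gstar {K G : Type*} [CommSemiring K] [Group G]
    (x : MonoidAlgebra K G) : MonoidAlgebra K G :=
  MonoidAlgebra.mapDomain (fun g : G => g⁻¹) x

section Aux

variable {K G : Type*} [CommSemiring K] [Group G]

lemma gstar_single (g : G) (a : K) :
    gstar (MonoidAlgebra.single g a) = MonoidAlgebra.single g⁻¹ a :=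
  MonoidAlgebra.mapDomain_single

lemma gstar_add (x y : MonoidAlgebra K G) : gstar (x + y) = gstar x + gstar y :=
  MonoidAlgebra.mapDomain_add _ x y

lemma gstar_smul (r : K) (x : MonoidAlgebra K G) : gstar (r • x) = r • gstar x :=
  MonoidAlgebra.mapDomain_smul _ r x

lemma gstar_one : gstar (1 : MonoidAlgebra K G) = 1 := by
  rw [MonoidAlgebra.one_def, gstar_single, inv_one]

lemma gstar_of (g : G) : gstar (MonoidAlgebra.of K G g) = MonoidAlgebra.single g⁻¹ (1 : K) := by
  rw [MonoidAlgebra.of_apply]; exact gstar_single g 1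

lemma gstar_mul (x y : MonoidAlgebra K G) : gstar (x * y) = gstar y * gstar x := by
  induction x using MonoidAlgebra.induction_on with
  | of g =>
    induction y using MonoidAlgebra.induction_on with
    | of h =>
      rw [MonoidAlgebra.of_apply, MonoidAlgebra.of_apply,
        MonoidAlgebra.single_mul_single, gstar_single, gstar_single, gstar_single,
        MonoidAlgebra.single_mul_single, mul_inv_rev, one_mul]
    | add f1 f2 h1 h2 =>
      rw [mul_add, gstar_add, gstar_add, h1, h2, add_mul]
    | smul r f hf =>
      rw [mul_smul_comm, gstar_smul, gstar_smul, hf, smul_mul_assoc]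
  | add f1 f2 h1 h2 =>
    rw [add_mul, gstar_add, gstar_add, h1, h2, mul_add]
  | smul r f hf =>
    rw [smul_mul_assoc, gstar_smul, gstar_smul, hf, mul_smul_comm]

/-- The key centrality fact for `single u 1 + single u⁻¹ 1`. -/
lemma cent_single (hone2 : (1 : K) + 1 = 0)
    (hswap : ∀ u g : G, (g * u = u * g ∧ g * u⁻¹ = u⁻¹ * g) ∨
      (g * u = u⁻¹ * g ∧ g * u⁻¹ = u * g) ∨ u⁻¹ = u) (u : G) :
    (MonoidAlgebra.single u 1 + MonoidAlgebra.single u⁻¹ 1 : MonoidAlgebra K G) ∈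
      Subalgebra.center K (MonoidAlgebra K G) := by
  rw [Subalgebra.mem_center_iff]
  intro y
  induction y using MonoidAlgebra.induction_on with
  | of g =>
    rw [MonoidAlgebra.of_apply, mul_add, add_mul]
    simp only [MonoidAlgebra.single_mul_single, one_mul, mul_one]
    rcases hswap u g with ⟨e1, e2⟩ | ⟨e1, e2⟩ | e
    · rw [e1, e2]
    · rw [e1, e2, add_comm]
    · rw [e, ← MonoidAlgebra.single_add, ← MonoidAlgebra.single_add, hone2,
        MonoidAlgebra.single_zero, MonoidAlgebra.single_zero]
  | add f1 f2 ih1 ih2 => rw [add_mul, ih1, ih2, ← mul_add]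
  | smul r f hf => rw [smul_mul_assoc, mul_smul_comm, hf]

lemma cross_center (hone2 : (1 : K) + 1 = 0)
    (hswap : ∀ u g : G, (g * u = u * g ∧ g * u⁻¹ = u⁻¹ * g) ∨
      (g * u = u⁻¹ * g ∧ g * u⁻¹ = u * g) ∨ u⁻¹ = u) (x1 x2 : MonoidAlgebra K G) :
    x1 * gstar x2 + x2 * gstar x1 ∈ Subalgebra.center K (MonoidAlgebra K G) := by
  induction x1 using MonoidAlgebra.induction_on with
  | of g =>
    induction x2 using MonoidAlgebra.induction_on with
    | of h =>
      rw [gstar_of, gstar_of, MonoidAlgebra.of_apply, MonoidAlgebra.of_apply,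
        MonoidAlgebra.single_mul_single, MonoidAlgebra.single_mul_single, one_mul]
      have e : h * g⁻¹ = (g * h⁻¹)⁻¹ := by group
      rw [e]
      exact cent_single hone2 hswap _
    | add f1 f2 ih1 ih2 =>
      have e : MonoidAlgebra.of K G g * gstar (f1 + f2)
          + (f1 + f2) * gstar (MonoidAlgebra.of K G g)
          = (MonoidAlgebra.of K G g * gstar f1 + f1 * gstar (MonoidAlgebra.of K G g))
          + (MonoidAlgebra.of K G g * gstar f2 + f2 * gstar (MonoidAlgebra.of K G g)) := by
        rw [gstar_add]; noncomm_ring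
      rw [e]; exact add_mem ih1 ih2
    | smul r f hf =>
      have e : MonoidAlgebra.of K G g * gstar (r • f)
          + (r • f) * gstar (MonoidAlgebra.of K G g)
          = r • (MonoidAlgebra.of K G g * gstar f + f * gstar (MonoidAlgebra.of K G g)) := by
        rw [gstar_smul, mul_smul_comm, smul_mul_assoc, smul_add]
      rw [e]; exact Subalgebra.smul_mem _ hf r
  | add f1 f2 ih1 ih2 =>
    have e : (f1 + f2) * gstar x2 + x2 * gstar (f1 + f2)
        = (f1 * gstar x2 + x2 * gstar f1) + (f2 * gstar x2 + x2 * gstar f2) := by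
      rw [gstar_add]; noncomm_ring
    rw [e]; exact add_mem ih1 ih2
  | smul r f hf =>
    have e : (r • f) * gstar x2 + x2 * gstar (r • f)
        = r • (f * gstar x2 + x2 * gstar f) := by
      rw [gstar_smul, mul_smul_comm, smul_mul_assoc, smul_add]
    rw [e]; exact Subalgebra.smul_mem _ hf r

lemma xxstar_center (hone2 : (1 : K) + 1 = 0)
    (hswap : ∀ u g : G, (g * u = u * g ∧ g * u⁻¹ = u⁻¹ * g) ∨
      (g * u = u⁻¹ * g ∧ g * u⁻¹ = u * g) ∨ u⁻¹ = u) (x : MonoidAlgebra K G) :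
    x * gstar x ∈ Subalgebra.center K (MonoidAlgebra K G) := by
  induction x using MonoidAlgebra.induction_on with
  | of g =>
    rw [gstar_of, MonoidAlgebra.of_apply, MonoidAlgebra.single_mul_single, one_mul,
      mul_inv_cancel, ← MonoidAlgebra.one_def]
    exact one_mem _
  | add f1 f2 ih1 ih2 =>
    have e : (f1 + f2) * gstar (f1 + f2)
        = (f1 * gstar f1 + f2 * gstar f2) + (f1 * gstar f2 + f2 * gstar f1) := by
      rw [gstar_add]; noncomm_ring
    rw [e]; exact add_mem (add_mem ih1 ih2) (cross_center hone2 hswap f1 f2)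
  | smul r f hf =>
    have e : (r • f) * gstar (r • f) = r • (r • (f * gstar f)) := by
      rw [gstar_smul, smul_mul_assoc, mul_smul_comm]
    rw [e]; exact Subalgebra.smul_mem _ (Subalgebra.smul_mem _ hf r) r

lemma hom_eq (hone2 : (1 : K) + 1 = 0)
    (hswap : ∀ u g : G, (g * u = u * g ∧ g * u⁻¹ = u⁻¹ * g) ∨
      (g * u = u⁻¹ * g ∧ g * u⁻¹ = u * g) ∨ u⁻¹ = u) (x y : MonoidAlgebra K G) :
    (x * y) * gstar (x * y) = (x * gstar x) * (y * gstar y) := by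
  have hc := Subalgebra.mem_center_iff.mp (xxstar_center hone2 hswap y) (gstar x)
  calc (x * y) * gstar (x * y) = x * ((y * gstar y) * gstar x) := by
        rw [gstar_mul]; noncomm_ring
    _ = x * (gstar x * (y * gstar y)) := by rw [← hc]
    _ = (x * gstar x) * (y * gstar y) := by noncomm_ring

end Aux

/-- Lemma 3(i): for a field `K` of characteristic `2` and a nonabelian finite
`2`-group `G` which is a semidirect product of a group `⟨b⟩` of order `2` and an abelian
`2`-group `A` with `b⁻¹ab = a⁻¹` for all `a ∈ A`, the map `x ↦ xx*` is a homomorphism from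
`V(KG)` onto `S_K(G) = {xx* : x ∈ V(KG)}` with kernel `V_*(KG)`; if moreover `K` is finite
then `|V_*(KG)| ⬝ |S_K(G)| = |V(KG)|`. -/
theorem stmt6 (K G : Type*) [Field K] [CharP K 2] [Group G] [Finite G]
    (hG2 : IsPGroup 2 G) (hnab : ∃ g h : G, g * h ≠ h * g)
    (A : Subgroup G) (hA : ∀ x ∈ A, ∀ y ∈ A, x * y = y * x)
    (b : G) (hb : orderOf b = 2)
    (hsplit : A ⊔ Subgroup.zpowers b = ⊤) (hdisj : A ⊓ Subgroup.zpowers b = ⊥)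
    (hinv : ∀ a ∈ A, b⁻¹ * a * b = a⁻¹) :
    (∀ x y : (MonoidAlgebra K G)ˣ,
      aug K G (x : MonoidAlgebra K G) = 1 → aug K G (y : MonoidAlgebra K G) = 1 →
      ((x * y : (MonoidAlgebra K G)ˣ) : MonoidAlgebra K G) *
          gstar ((x * y : (MonoidAlgebra K G)ˣ) : MonoidAlgebra K G) =
        ((x : MonoidAlgebra K G) * gstar (x : MonoidAlgebra K G)) *
          ((y : MonoidAlgebra K G) * gstar (y : MonoidAlgebra K G))) ∧
    (∀ x : (MonoidAlgebra K G)ˣ, aug K G (x : MonoidAlgebra K G) = 1 →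
      ((x : MonoidAlgebra K G) * gstar (x : MonoidAlgebra K G) = 1 ↔
        gstar (x : MonoidAlgebra K G) = ((x⁻¹ : (MonoidAlgebra K G)ˣ) : MonoidAlgebra K G))) ∧
    (Finite K →
      Nat.card {u : (MonoidAlgebra K G)ˣ |
          aug K G (u : MonoidAlgebra K G) = 1 ∧
          gstar (u : MonoidAlgebra K G) = ((u⁻¹ : (MonoidAlgebra K G)ˣ) : MonoidAlgebra K G)} *
        Nat.card {z : MonoidAlgebra K G | ∃ x : (MonoidAlgebra K G)ˣ,
          aug K G (x : MonoidAlgebra K G) = 1 ∧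
          z = (x : MonoidAlgebra K G) * gstar (x : MonoidAlgebra K G)} =
      Nat.card {u : (MonoidAlgebra K G)ˣ | aug K G (u : MonoidAlgebra K G) = 1}) := by
  -- characteristic two
  have hone2 : (1 : K) + 1 = 0 := by
    rw [one_add_one_eq_two]
    exact_mod_cast CharP.cast_eq_zero K 2
  -- basic facts about b
  have hb2 : b * b = 1 := by
    have h := pow_orderOf_eq_one b
    rw [hb, pow_two] at h
    exact h
  have hbinv : b⁻¹ = b := inv_eq_of_mul_eq_one_right hb2
  -- b conjugation
  have hconj : ∀ a ∈ A, b * a * b⁻¹ = a⁻¹ := by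
    intro a ha
    have h := hinv a⁻¹ (A.inv_mem ha)
    rw [inv_inv] at h
    conv_lhs => rw [← h]
    group
  -- A is normal
  have hnorm : A.Normal := by
    rw [← Subgroup.normalizer_eq_top_iff]
    have hbA : b ∈ Subgroup.normalizer (A : Set G) := by
      rw [Subgroup.mem_normalizer_iff]
      intro h
      constructor
      · intro hh
        rw [hconj h hh]
        exact A.inv_mem hh
      · intro hh
        have h2 := hconj _ hh
        have e : b * (b * h * b⁻¹) * b⁻¹ = h := by
          rw [hbinv]
          calc b * (b * h * b) * b = (b*b) * h * (b*b) := by group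
          _ = h := by rw [hb2, one_mul, mul_one]
        rw [e] at h2
        rw [h2]
        exact A.inv_mem hh
    rw [← top_le_iff, ← hsplit]
    exact sup_le A.le_normalizer (Subgroup.zpowers_le.mpr hbA)
  -- every element is in A or A·b
  have hmem : ∀ g : G, g ∈ A ∨ g * b ∈ A := by
    intro g
    have hg : g ∈ (↑(A ⊔ Subgroup.zpowers b) : Set G) := by
      rw [hsplit]; trivial
    haveI := hnorm
    rw [Subgroup.normal_mul A (Subgroup.zpowers b)] at hg
    rw [Set.mem_mul] at hg
    obtain ⟨a, ha, y, hy, hprod⟩ := hg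
    rw [SetLike.mem_coe, Subgroup.mem_zpowers_iff] at hy
    obtain ⟨k, hk⟩ := hy
    rcases Int.even_or_odd k with ⟨m, hm⟩ | ⟨m, hm⟩
    · left
      have hy1 : y = 1 := by
        rw [← hk, hm, zpow_add, ← zpow_add]
        have : m + m = 2 * m := by ring
        rw [this, zpow_mul]
        norm_num
        rw [pow_two, hb2, one_zpow]
      rw [← hprod, hy1, mul_one]
      exact ha
    · right
      have hyb : y = b := by
        rw [← hk, hm, zpow_add, zpow_one, zpow_mul]
        rw [show ((2:ℤ)) = ((2:ℕ):ℤ) from rfl, zpow_natCast, pow_two, hb2, one_zpow, one_mul]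
      have : g * b = a * (y * b) := by rw [← hprod]; group
      rw [this, hyb, hb2, mul_one]
      exact ha
  -- the group-theoretic swap lemma
  have hswap : ∀ u g : G, (g * u = u * g ∧ g * u⁻¹ = u⁻¹ * g) ∨
      (g * u = u⁻¹ * g ∧ g * u⁻¹ = u * g) ∨ u⁻¹ = u := by
    intro u g
    rcases hmem u with hu | hu
    · rcases hmem g with hg | hg
      · exact Or.inl ⟨hA g hg u hu, hA g hg u⁻¹ (A.inv_mem hu)⟩
      · refine Or.inr (Or.inl ⟨?_, ?_⟩)
        · have e1 : g * u = (g * b) * (b⁻¹ * u * b) * b⁻¹ := by group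
          rw [hinv u hu] at e1
          rw [hA (g * b) hg u⁻¹ (A.inv_mem hu)] at e1
          rw [e1]
          group
        · have e1 : g * u⁻¹ = (g * b) * (b⁻¹ * u⁻¹ * b) * b⁻¹ := by group
          rw [hinv u⁻¹ (A.inv_mem hu), inv_inv] at e1
          rw [hA (g * b) hg u hu] at e1
          rw [e1]
          group
    · refine Or.inr (Or.inr ?_)
      have h := hinv (u * b) hu
      have key : u⁻¹ = u * (b * b) := by
        calc u⁻¹ = b * (u * b)⁻¹ := by group
        _ = b * (b⁻¹ * (u * b) * b) := by rw [h]
        _ = u * (b * b) := by group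
      rw [key, hb2, mul_one]
  -- Part 2 (works for any unit)
  have part2 : ∀ x : (MonoidAlgebra K G)ˣ,
      ((x : MonoidAlgebra K G) * gstar (x : MonoidAlgebra K G) = 1 ↔
        gstar (x : MonoidAlgebra K G) = ((x⁻¹ : (MonoidAlgebra K G)ˣ) : MonoidAlgebra K G)) := by
    intro x
    constructor
    · intro h
      calc gstar (x : MonoidAlgebra K G)
          = ((x⁻¹ : (MonoidAlgebra K G)ˣ) * (x : (MonoidAlgebra K G)ˣ) : (MonoidAlgebra K G)ˣ)
            * gstar (x : MonoidAlgebra K G) := by rw [inv_mul_cancel x, Units.val_one, one_mul]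
      _ = ((x⁻¹ : (MonoidAlgebra K G)ˣ) : MonoidAlgebra K G)
            * ((x : MonoidAlgebra K G) * gstar (x : MonoidAlgebra K G)) := by
          rw [Units.val_mul, mul_assoc]
      _ = ((x⁻¹ : (MonoidAlgebra K G)ˣ) : MonoidAlgebra K G) := by rw [h, mul_one]
    · intro h
      rw [h, Units.mul_inv]
  refine ⟨?_, fun x _ => part2 x, ?_⟩
  · intro x y _ _
    rw [Units.val_mul]
    exact hom_eq hone2 hswap _ _
  -- Part 3: counting
  intro hKfin
  haveI : Finite (MonoidAlgebra K G) := Finite.of_equiv _ (Finsupp.equivFunOnFinite.symm.trans MonoidAlgebra.coeffEquiv.symm)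
  -- the subgroup V of normalized units
  set R := MonoidAlgebra K G with hR
  let V : Subgroup Rˣ :=
    { carrier := {u : Rˣ | aug K G (u : R) = 1}
      mul_mem' := by
        intro u v hu hv
        simp only [Set.mem_setOf_eq, Units.val_mul, map_mul] at *
        rw [hu, hv, mul_one]
      one_mem' := by simp only [Set.mem_setOf_eq, Units.val_one, map_one]
      inv_mem' := by
        intro u hu
        simp only [Set.mem_setOf_eq] at *
        have h : aug K G ((u⁻¹ : Rˣ) : R) * aug K G ((u : Rˣ) : R) = 1 := by
          rw [← map_mul, ← Units.val_mul, inv_mul_cancel u, Units.val_one, map_one]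
        rw [hu, mul_one] at h
        exact h }
  -- the squaring homomorphism ψ : Rˣ →* Rˣ
  have hval : ∀ x : Rˣ, ((x : R) * gstar (x : R)) * (((x⁻¹ : Rˣ) : R) * gstar ((x⁻¹ : Rˣ) : R)) = 1 := by
    intro x
    rw [← hom_eq hone2 hswap, ← Units.val_mul, mul_inv_cancel x, Units.val_one, gstar_one, mul_one]
  have hval' : ∀ x : Rˣ, (((x⁻¹ : Rˣ) : R) * gstar ((x⁻¹ : Rˣ) : R)) * ((x : R) * gstar (x : R)) = 1 := by
    intro x
    rw [← hom_eq hone2 hswap, ← Units.val_mul, inv_mul_cancel x, Units.val_one, gstar_one, mul_one]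
  let ψ : Rˣ →* Rˣ :=
    { toFun := fun x => ⟨(x : R) * gstar (x : R), ((x⁻¹ : Rˣ) : R) * gstar ((x⁻¹ : Rˣ) : R),
        hval x, hval' x⟩
      map_one' := by
        refine Units.ext ?_
        show ((1 : Rˣ) : R) * gstar ((1 : Rˣ) : R) = ((1 : Rˣ) : R)
        simp only [Units.val_one, gstar_one, mul_one]
      map_mul' := by
        intro x y
        refine Units.ext ?_
        show ((x * y : Rˣ) : R) * gstar ((x * y : Rˣ) : R)
            = ((x : R) * gstar (x : R)) * ((y : R) * gstar (y : R))
        rw [Units.val_mul]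
        exact hom_eq hone2 hswap _ _ }
  let φ : V →* Rˣ := ψ.comp V.subtype
  -- cardinality identities
  have hcard : Nat.card V = Nat.card φ.range * Nat.card φ.ker := by
    rw [Subgroup.card_eq_card_quotient_mul_card_subgroup φ.ker,
      Nat.card_congr (QuotientGroup.quotientKerEquivRange φ).toEquiv]
  -- kernel set equivalence
  have e1 : {u : Rˣ | aug K G (u : R) = 1 ∧
      gstar (u : R) = ((u⁻¹ : Rˣ) : R)} ≃ φ.ker := by
    refine ⟨fun w => ⟨⟨w.1, w.2.1⟩, ?_⟩, fun w => ⟨w.1.1, w.1.2, ?_⟩, fun w => rfl, fun w => rfl⟩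
    · have := (part2 w.1).mpr w.2.2
      exact Units.ext this
    · have hker := w.2
      have : ((w.1 : Rˣ) : R) * gstar ((w.1 : Rˣ) : R) = 1 := congrArg Units.val hker
      exact (part2 (w.1 : Rˣ)).mp this
  -- image set equivalence
  have e2 : φ.range ≃ {z : R | ∃ x : Rˣ, aug K G (x : R) = 1 ∧
      z = (x : R) * gstar (x : R)} := by
    refine Equiv.ofBijective (fun w => ⟨((w : Rˣ) : R), ?_⟩) ⟨?_, ?_⟩
    · obtain ⟨v, hv⟩ := w.2
      exact ⟨(v : Rˣ), v.2, by rw [← hv]; rfl⟩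
    · intro w w' h
      exact Subtype.ext (Units.ext (congrArg Subtype.val h))
    · rintro ⟨z, x, hx, hz⟩
      exact ⟨⟨ψ x, ⟨⟨x, hx⟩, rfl⟩⟩, Subtype.ext hz.symm⟩
  rw [Nat.card_congr e1, Nat.card_congr e2.symm, mul_comm, ← hcard]
  rfl
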